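/- Let C be an elasticity tensor with harmonic components (λ, μ, a, b, D), i.e., C i j k l = λ δᵢⱼ δₖₗ + μ (δᵢₖ δⱼₗ + δᵢₗ δⱼₖ) + δᵢⱼ a k l + δₖₗ a i j + δᵢₖ b j l + δⱼₗ b i k + δᵢₗ b j k + δⱼₖ b i l + D i j k l with a, b symmetric traceless 3×3 matrices and D ∈ H⁴. Then the stabilizer of C in SO(3) equals the intersection Stab(a) ∩ Stab(b) ∩ Stab(d₂(D)) ∩ Stab(D), where Stab(a) = {g ∈ SO(3) | g a gᵀ = a} (and likewise for b and d₂(D)) and Stab(D) = {g ∈ SO(3) | g·D = D}. -/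

import Mathlib

/-!
Rotations act on the harmonic components separately: `g·C` has components
`(λ, μ, g a gᵀ, g b gᵀ, g·D)`. The two independent traces of `C`, namely
`(3λ + 2μ) 1 + 3a + 4b` and `(λ + 4μ) 1 + 2a + 5b`, are equivariant, so `g·C = C` forces
`g` to fix `a` and `b` (the linear system has determinant `7`), and then `D`. Finally `d₂` is
equivariant: flattening index pairs turns `g·_` into conjugation by `g ⊗ₖ g` and `D²` into a
matrix square.
-/

open Matrix BigOperators

abbrev Mat3 := Matrix (Fin 3) (Fin 3) ℝ
abbrev T4 := Fin 3 → Fin 3 → Fin 3 → Fin 3 → ℝ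

/-- `g ∈ SO(3)`: real orthogonal 3×3 matrix of determinant 1. -/
def IsSO3 (g : Mat3) : Prop := g * gᵀ = 1 ∧ g.det = 1

/-- A harmonic fourth-order tensor: totally symmetric and traceless. -/
def IsHarm (D : T4) : Prop :=
  (∀ i j k l, D i j k l = D j i k l) ∧
  (∀ i j k l, D i j k l = D i k j l) ∧
  (∀ i j k l, D i j k l = D i j l k) ∧
  (∀ i j, ∑ k, D k k i j = 0)

/-- The action of a rotation `g` on a fourth-order tensor. -/
noncomputable def act (g : Mat3) (D : T4) : T4 := fun i j k l =>
  ∑ p, ∑ q, ∑ r, ∑ s, g i p * g j q * g k r * g l s * D p q r s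

/-- `D²`, the square of a fourth-order tensor. -/
noncomputable def sqT (D : T4) : T4 := fun i j k l => ∑ p, ∑ q, D i j p q * D p q k l

/-- `D³`, the cube of a fourth-order tensor. -/
noncomputable def cbT (D : T4) : T4 := fun i j k l => ∑ p, ∑ q, sqT D i j p q * D p q k l

/-- The second-order Boehler covariant `d₂(D) j l = ∑ᵢ (D²) i j i l`. -/
noncomputable def d2 (D : T4) : Mat3 := Matrix.of fun j l => ∑ i, sqT D i j i l

/-- The second-order covariant `d₃(D) j l = ∑ᵢ (D³) i j i l`. -/
noncomputable def d3 (D : T4) : Mat3 := Matrix.of fun j l => ∑ i, cbT D i j i l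

/-- Fundamental invariant `J₂ = tr d₂`. -/
noncomputable def J2 (D : T4) : ℝ := (d2 D).trace
/-- Fundamental invariant `J₃ = tr d₃`. -/
noncomputable def J3 (D : T4) : ℝ := (d3 D).trace
/-- Fundamental invariant `J₄ = tr(d₂²)`. -/
noncomputable def J4 (D : T4) : ℝ := (d2 D * d2 D).trace
/-- Fundamental invariant `J₅ = ∑ (d₂)ᵢⱼ D i j k l (d₂)ₖₗ`. -/
noncomputable def J5 (D : T4) : ℝ :=
  ∑ i, ∑ j, ∑ k, ∑ l, d2 D i j * D i j k l * d2 D k l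
/-- Fundamental invariant `J₆ = tr(d₂³)`. -/
noncomputable def J6 (D : T4) : ℝ := (d2 D * d2 D * d2 D).trace
/-- Fundamental invariant `J₇ = ∑ (d₂²)ᵢⱼ D i j k l (d₂)ₖₗ`. -/
noncomputable def J7 (D : T4) : ℝ :=
  ∑ i, ∑ j, ∑ k, ∑ l, (d2 D * d2 D) i j * D i j k l * d2 D k l
/-- Fundamental invariant `J₈ = ∑ (d₂²)ᵢⱼ (D²) i j k l (d₂)ₖₗ`. -/
noncomputable def J8 (D : T4) : ℝ :=
  ∑ i, ∑ j, ∑ k, ∑ l, (d2 D * d2 D) i j * sqT D i j k l * d2 D k l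
/-- Fundamental invariant `J₉ = ∑ (d₂²)ᵢⱼ D i j k l (d₂²)ₖₗ`. -/
noncomputable def J9 (D : T4) : ℝ :=
  ∑ i, ∑ j, ∑ k, ∑ l, (d2 D * d2 D) i j * D i j k l * (d2 D * d2 D) k l
/-- Fundamental invariant `J₁₀ = ∑ (d₂²)ᵢⱼ (D²) i j k l (d₂²)ₖₗ`. -/
noncomputable def J10 (D : T4) : ℝ :=
  ∑ i, ∑ j, ∑ k, ∑ l, (d2 D * d2 D) i j * sqT D i j k l * (d2 D * d2 D) k l

/-- The totally symmetric tensor whose value at `(i,j,k,l)` depends only on the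
multiset of indices `{i,j,k,l}`. -/
noncomputable def symT (f : Multiset (Fin 3) → ℝ) : T4 := fun i j k l => f {i, j, k, l}

/-- Kronecker delta on `Fin 3`. -/
def kd (i j : Fin 3) : ℝ := if i = j then 1 else 0

/-- An elasticity tensor: minor and major index symmetries. -/
def IsEla (C : T4) : Prop :=
  ∀ i j k l, C i j k l = C j i k l ∧ C i j k l = C i j l k ∧ C i j k l = C k l i j

/-- The harmonic decomposition equation `C = (λ, μ, a, b, D)`. -/
def HarmDecomp (C : T4) (lam mu : ℝ) (a b : Mat3) (D : T4) : Prop :=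
  ∀ i j k l, C i j k l =
    lam * kd i j * kd k l + mu * (kd i k * kd j l + kd i l * kd j k) +
    kd i j * a k l + kd k l * a i j +
    kd i k * b j l + kd j l * b i k + kd i l * b j k + kd j k * b i l +
    D i j k l

open scoped Kronecker

def outer12 (X Y : Mat3) : T4 := fun i j k l => X i j * Y k l

def outer13 (X Y : Mat3) : T4 := fun i j k l => X i k * Y j l

def outer14 (X Y : Mat3) : T4 := fun i j k l => X i l * Y j k

def harmTensor (lam mu : ℝ) (a b : Mat3) (D : T4) : T4 :=
  lam • outer12 1 1 + mu • (outer13 1 1 + outer14 1 1) + outer12 1 a + outer12 a 1 +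
    outer13 1 b + outer13 b 1 + outer14 1 b + outer14 b 1 + D

theorem harmDecomp_iff {C : T4} {lam mu : ℝ} {a b : Mat3} {D : T4} :
    HarmDecomp C lam mu a b D ↔ C = harmTensor lam mu a b D := by
  simp only [HarmDecomp, funext_iff, harmTensor, outer12, outer13, outer14, kd, Pi.add_apply,
    Pi.smul_apply, one_apply, smul_eq_mul]
  exact forall₄_congr fun i j k l => Eq.congr_right (by ring)

theorem harmTensor_injective (lam mu : ℝ) (a b : Mat3) :
    Function.Injective (harmTensor lam mu a b) :=
  fun _ _ h => add_left_cancel h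

theorem act_add (g : Mat3) (S T : T4) : act g (S + T) = act g S + act g T := by
  funext i j k l
  simp only [act, Pi.add_apply, mul_add, Finset.sum_add_distrib]

theorem act_smul (g : Mat3) (c : ℝ) (T : T4) : act g (c • T) = c • act g T := by
  funext i j k l
  simp only [act, Pi.smul_apply, smul_eq_mul, Finset.mul_sum, mul_left_comm c]

theorem act_outer12 (g X Y : Mat3) :
    act g (outer12 X Y) = outer12 (g * X * gᵀ) (g * Y * gᵀ) := by
  funext i j k l
  simp only [act, outer12, mul_apply, transpose_apply, Fin.sum_univ_three]
  ring

theorem act_outer13 (g X Y : Mat3) :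
    act g (outer13 X Y) = outer13 (g * X * gᵀ) (g * Y * gᵀ) := by
  funext i j k l
  simp only [act, outer13, mul_apply, transpose_apply, Fin.sum_univ_three]
  ring

theorem act_outer14 (g X Y : Mat3) :
    act g (outer14 X Y) = outer14 (g * X * gᵀ) (g * Y * gᵀ) := by
  funext i j k l
  simp only [act, outer14, mul_apply, transpose_apply, Fin.sum_univ_three]
  ring

theorem act_harmTensor {g : Mat3} (hg : g * gᵀ = 1) (lam mu : ℝ) (a b : Mat3) (D : T4) :
    act g (harmTensor lam mu a b D) =
      harmTensor lam mu (g * a * gᵀ) (g * b * gᵀ) (act g D) := by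
  simp only [harmTensor, act_add, act_smul, act_outer12, act_outer13, act_outer14, mul_one, hg]

def trace12 : T4 →ₗ[ℝ] Mat3 where
  toFun T := of fun p q => ∑ k, T k k p q
  map_add' S T := by ext; simp [Finset.sum_add_distrib]
  map_smul' c T := by ext; simp [Finset.mul_sum]

def trace13 : T4 →ₗ[ℝ] Mat3 where
  toFun T := of fun p q => ∑ k, T k p k q
  map_add' S T := by ext; simp [Finset.sum_add_distrib]
  map_smul' c T := by ext; simp [Finset.mul_sum]

theorem trace12_apply (T : T4) (p q : Fin 3) : trace12 T p q = ∑ k, T k k p q := rfl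

theorem trace13_apply (T : T4) (p q : Fin 3) : trace13 T p q = ∑ k, T k p k q := rfl

theorem d2_eq_trace13_sqT (D : T4) : d2 D = trace13 (sqT D) := rfl

section Outer

variable (X Y : Mat3)

theorem trace12_outer12 : trace12 (outer12 X Y) = X.trace • Y := by
  ext; simp [trace12_apply, outer12, trace, Finset.sum_mul]

theorem trace12_outer13 : trace12 (outer13 X Y) = Xᵀ * Y := by
  ext; simp [trace12_apply, outer13, mul_apply]

theorem trace12_outer14 : trace12 (outer14 X Y) = Yᵀ * X := by
  ext; simp [trace12_apply, outer14, mul_apply, mul_comm]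

theorem trace13_outer12 : trace13 (outer12 X Y) = Xᵀ * Y := by
  ext; simp [trace13_apply, outer12, mul_apply]

theorem trace13_outer13 : trace13 (outer13 X Y) = X.trace • Y := by
  ext; simp [trace13_apply, outer13, trace, Finset.sum_mul]

theorem trace13_outer14 : trace13 (outer14 X Y) = Y * X := by
  ext; simp [trace13_apply, outer14, mul_apply, mul_comm]

end Outer

theorem trace12_harmTensor {lam mu : ℝ} {a b : Mat3} {D : T4} (ha : a.trace = 0) (hb : bᵀ = b)
    (hD : trace12 D = 0) :
    trace12 (harmTensor lam mu a b D) =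
      (3 * lam + 2 * mu) • 1 + (3 : ℝ) • a + (4 : ℝ) • b := by
  simp only [harmTensor, map_add, map_smul, trace12_outer12, trace12_outer13, trace12_outer14,
    trace_one, Fintype.card_fin, Nat.cast_ofNat, transpose_one, one_mul, mul_one, zero_smul,
    add_zero, ha, hb, hD]
  module

theorem trace13_harmTensor {lam mu : ℝ} {a b : Mat3} {D : T4} (ha : aᵀ = a) (hb : b.trace = 0)
    (hD : trace13 D = 0) :
    trace13 (harmTensor lam mu a b D) =
      (lam + 4 * mu) • 1 + (2 : ℝ) • a + (5 : ℝ) • b := by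
  simp only [harmTensor, map_add, map_smul, trace13_outer12, trace13_outer13, trace13_outer14,
    trace_one, Fintype.card_fin, Nat.cast_ofNat, transpose_one, one_mul, mul_one, zero_smul,
    add_zero, ha, hb, hD]
  module

theorem IsHarm.trace12_eq_zero {D : T4} (hD : IsHarm D) : trace12 D = 0 := by
  ext p q; exact hD.2.2.2 p q

theorem IsHarm.trace13_eq_zero {D : T4} (hD : IsHarm D) : trace13 D = 0 := by
  ext p q; simpa [trace13_apply, ← hD.2.1] using hD.2.2.2 p q

theorem sum_mul_mul_eq_sum_diag {ι R : Type*} [Fintype ι] [DecidableEq ι] [CommSemiring R]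
    {G : Matrix ι ι R} (hG : Gᵀ * G = 1) (F : ι → ι → R) :
    ∑ k, ∑ p, ∑ q, G k p * G k q * F p q = ∑ p, F p p :=
  calc ∑ k, ∑ p, ∑ q, G k p * G k q * F p q = trace (G * of F * Gᵀ) := by
        simp only [trace, diag, mul_apply, transpose_apply, of_apply, Finset.sum_mul]
        refine Finset.sum_congr rfl fun k _ => ?_
        rw [Finset.sum_comm]
        exact Finset.sum_congr rfl fun _ _ => Finset.sum_congr rfl fun _ _ => by ring
    _ = trace (Gᵀ * G * of F) := trace_mul_cycle _ _ _
    _ = ∑ p, F p p := by rw [hG, one_mul]; rfl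

section Orthogonal

variable {g : Mat3}

theorem trace12_act (hg : gᵀ * g = 1) (T : T4) : trace12 (act g T) = g * trace12 T * gᵀ := by
  ext i j
  calc trace12 (act g T) i j
      = ∑ k, ∑ p, ∑ q, g k p * g k q * ∑ r, ∑ s, g i r * g j s * T p q r s := by
        simp only [trace12_apply, act, Fin.sum_univ_three]; ring
    _ = ∑ p, ∑ r, ∑ s, g i r * g j s * T p p r s := sum_mul_mul_eq_sum_diag hg _
    _ = (g * trace12 T * gᵀ) i j := by
        simp only [trace12_apply, mul_apply, transpose_apply, Fin.sum_univ_three]; ring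

theorem trace13_act (hg : gᵀ * g = 1) (T : T4) : trace13 (act g T) = g * trace13 T * gᵀ := by
  ext j l
  calc trace13 (act g T) j l
      = ∑ i, ∑ p, ∑ r, g i p * g i r * ∑ q, ∑ s, g j q * g l s * T p q r s := by
        simp only [trace13_apply, act, Fin.sum_univ_three]; ring
    _ = ∑ p, ∑ q, ∑ s, g j q * g l s * T p q p s := sum_mul_mul_eq_sum_diag hg _
    _ = (g * trace13 T * gᵀ) j l := by
        simp only [trace13_apply, mul_apply, transpose_apply, Fin.sum_univ_three]; ring

def flatten (T : T4) : Matrix (Fin 3 × Fin 3) (Fin 3 × Fin 3) ℝ :=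
  of fun x y => T x.1 x.2 y.1 y.2

theorem flatten_injective : Function.Injective flatten := fun _ _ h => by
  funext i j k l
  exact congrFun₂ h (i, j) (k, l)

theorem flatten_sqT (D : T4) : flatten (sqT D) = flatten D * flatten D := by
  ext x y; simp [flatten, sqT, mul_apply, Fintype.sum_prod_type]

theorem flatten_act (g : Mat3) (T : T4) :
    flatten (act g T) = (g ⊗ₖ g) * flatten T * (g ⊗ₖ g)ᵀ := by
  ext ⟨i, j⟩ ⟨k, l⟩
  simp only [flatten, act, of_apply, mul_apply, transpose_apply, kronecker_apply,
    Fintype.sum_prod_type, Fin.sum_univ_three]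
  ring

theorem sqT_act (hg : gᵀ * g = 1) (D : T4) : sqT (act g D) = act g (sqT D) := by
  have hK : (g ⊗ₖ g)ᵀ * (g ⊗ₖ g) = 1 := by
    rw [← kroneckerMap_transpose, ← mul_kronecker_mul, hg, one_kronecker_one]
  apply flatten_injective
  rw [flatten_sqT, flatten_act, flatten_act, flatten_sqT]
  set K := g ⊗ₖ g
  calc K * flatten D * Kᵀ * (K * flatten D * Kᵀ)
        = K * flatten D * (Kᵀ * K) * flatten D * Kᵀ := by simp only [Matrix.mul_assoc]
    _ = K * (flatten D * flatten D) * Kᵀ := by rw [hK, Matrix.mul_one, Matrix.mul_assoc K]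

theorem d2_act (hg : gᵀ * g = 1) (D : T4) : d2 (act g D) = g * d2 D * gᵀ := by
  rw [d2_eq_trace13_sqT, sqT_act hg, trace13_act hg, d2_eq_trace13_sqT]

theorem conj_eq_of_act_harmTensor_eq {lam mu : ℝ} {a b : Mat3} {D : T4}
    (hg' : g * gᵀ = 1) (ha : aᵀ = a) (ha0 : a.trace = 0) (hb : bᵀ = b) (hb0 : b.trace = 0)
    (hD : IsHarm D) (h : act g (harmTensor lam mu a b D) = harmTensor lam mu a b D) :
    g * a * gᵀ = a ∧ g * b * gᵀ = b := by
  have hg : gᵀ * g = 1 := mul_eq_one_comm.mp hg'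
  have h12 := congrArg trace12 h
  have h13 := congrArg trace13 h
  rw [trace12_act hg, trace12_harmTensor ha0 hb hD.trace12_eq_zero] at h12
  rw [trace13_act hg, trace13_harmTensor ha hb0 hD.trace13_eq_zero] at h13
  simp only [Matrix.mul_add, Matrix.add_mul, Matrix.mul_smul, Matrix.smul_mul, Matrix.mul_one,
    hg'] at h12 h13
  constructor
  · linear_combination (norm := module) (5 / 7 : ℝ) • h12 - (4 / 7 : ℝ) • h13
  · linear_combination (norm := module) (3 / 7 : ℝ) • h13 - (2 / 7 : ℝ) • h12

end Orthogonal

theorem stabilizer_elasticity_eq_intersection_general (C : T4)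
    (lam mu : ℝ) (a b : Mat3) (D : T4)
    (ha : aᵀ = a) (ha0 : a.trace = 0) (hb : bᵀ = b) (hb0 : b.trace = 0)
    (hD : IsHarm D) (hdec : HarmDecomp C lam mu a b D) :
    ∀ g : Mat3, IsSO3 g →
      (act g C = C ↔
        (g * a * gᵀ = a ∧ g * b * gᵀ = b ∧ g * d2 D * gᵀ = d2 D ∧ act g D = D)) := by
  rintro g ⟨hg', -⟩
  have hg : gᵀ * g = 1 := mul_eq_one_comm.mp hg'
  rw [harmDecomp_iff.mp hdec]
  constructor
  · intro h
    obtain ⟨hA, hB⟩ := conj_eq_of_act_harmTensor_eq hg' ha ha0 hb hb0 hD h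
    have hDstab : act g D = D :=
      harmTensor_injective lam mu a b (by rwa [act_harmTensor hg', hA, hB] at h)
    exact ⟨hA, hB, by rw [← d2_act hg, hDstab], hDstab⟩
  · rintro ⟨hA, hB, -, hDstab⟩
    rw [act_harmTensor hg', hA, hB, hDstab]

/-- the stabilizer in `SO(3)` of an elasticity tensor `C` with harmonic
components `(λ, μ, a, b, D)` is the intersection of the stabilizers of `a`, `b`, `d₂(D)`
and `D`. -/
theorem stabilizer_elasticity_eq_intersection (C : T4) (hC : IsEla C)
    (lam mu : ℝ) (a b : Mat3) (D : T4)
    (ha : aᵀ = a) (ha0 : a.trace = 0) (hb : bᵀ = b) (hb0 : b.trace = 0)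
    (hD : IsHarm D) (hdec : HarmDecomp C lam mu a b D) :
    ∀ g : Mat3, IsSO3 g →
      (act g C = C ↔
        (g * a * gᵀ = a ∧ g * b * gᵀ = b ∧ g * d2 D * gᵀ = d2 D ∧ act g D = D)) :=
  stabilizer_elasticity_eq_intersection_general C lam mu a b D ha ha0 hb hb0 hD hdec
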